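/- arXiv:2412.16819 — 2 statements merged into one kernel-verified Lean document; each statement's English description precedes it below -/
import Mathlib

section
/- For λ > 0 and q ∈ (0,1), every nonzero minimizer x* of f(x) = λ|x|^q + (1/2)(x-a)^2 with a > 0 satisfies x* > 0 and the stationarity equation x* - a + λq (x*)^{q-1} = 0. -/
/-!
Reflecting a negative point `x` to `-x` keeps `λ|x|^q` and, since `a > 0`, strictly decreases
`(x - a)²`; so a nonzero minimizer is positive. On `(0, ∞)` the objective is the smooth function
`λ x^q + (x - a)²/2`, and Fermat's rule at the (global, hence local) minimizer gives the equation.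
-/

noncomputable def lqObjective (lam q a x : ℝ) : ℝ :=
  lam * |x| ^ q + (1 / 2) * (x - a) ^ 2

section

variable {lam q a x : ℝ}

theorem lqObjective_neg_lt_of_neg (ha : 0 < a) (hx : x < 0) :
    lqObjective lam q a (-x) < lqObjective lam q a x := by
  simp only [lqObjective, abs_neg]
  nlinarith [mul_pos ha (neg_pos.mpr hx)]

theorem hasDerivAt_lqObjective_of_pos (hx : 0 < x) :
    HasDerivAt (lqObjective lam q a) (x - a + lam * q * x ^ (q - 1)) x := by
  have hpow : HasDerivAt (fun y : ℝ => y ^ q) (q * x ^ (q - 1)) x :=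
    Real.hasDerivAt_rpow_const (Or.inl hx.ne')
  have hsq : HasDerivAt (fun y : ℝ => (1 / 2) * (y - a) ^ 2) (x - a) x :=
    ((((hasDerivAt_id x).sub_const a).pow 2).const_mul (1 / 2 : ℝ)).congr_deriv
      (by simp only [id, Nat.cast_ofNat]; ring)
  have hsmooth := (hpow.const_mul lam).add hsq
  have heq :
      (fun y : ℝ => lam * y ^ q + (1 / 2) * (y - a) ^ 2) =ᶠ[nhds x] lqObjective lam q a := by
    filter_upwards [eventually_gt_nhds hx] with y hy
    rw [lqObjective, abs_of_pos hy]
  exact (hsmooth.congr_of_eventuallyEq heq.symm).congr_deriv (by ring)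

end

theorem prox_lq_nonzero_minimizer_stationarity_general (lam q a : ℝ)
    (ha : 0 < a)
    (f : ℝ → ℝ) (hf : ∀ x, f x = lam * |x| ^ q + (1 / 2) * (x - a) ^ 2)
    (xs : ℝ) (hmin : ∀ y, f xs ≤ f y) (hne : xs ≠ 0) :
    0 < xs ∧ xs - a + lam * q * xs ^ (q - 1) = 0 := by
  obtain rfl : f = lqObjective lam q a := funext hf
  have hpos : 0 < xs := by
    refine hne.lt_or_gt.resolve_left fun hneg => ?_
    exact (hmin (-xs)).not_gt (lqObjective_neg_lt_of_neg ha hneg)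
  have hlocal : IsLocalMin (lqObjective lam q a) xs := Filter.Eventually.of_forall hmin
  exact ⟨hpos, hlocal.hasDerivAt_eq_zero (hasDerivAt_lqObjective_of_pos hpos)⟩

/-- Every nonzero minimizer of `λ|x|^q + (1/2)(x-a)²` with `a > 0` is positive and
satisfies the stationarity equation `x - a + λ q x^(q-1) = 0`. -/
theorem prox_lq_nonzero_minimizer_stationarity (lam q a : ℝ)
    (hlam : 0 < lam) (hq : 0 < q) (hq1 : q < 1) (ha : 0 < a)
    (f : ℝ → ℝ) (hf : ∀ x, f x = lam * |x| ^ q + (1 / 2) * (x - a) ^ 2)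
    (xs : ℝ) (hmin : ∀ y, f xs ≤ f y) (hne : xs ≠ 0) :
    0 < xs ∧ xs - a + lam * q * xs ^ (q - 1) = 0 :=
  prox_lq_nonzero_minimizer_stationarity_general lam q a ha f hf xs hmin hne
end

section
/- Let a ∈ ℝ^m be nonzero and λ > 0, p ∈ [0,1). If t* minimizes the scalar problem λ|t|^p + (1/2)(t - ‖a‖)^2 over t ∈ ℝ, then x* = t*·a/‖a‖ minimizes λ‖x‖^p + (1/2)‖x - a‖^2 over x ∈ ℝ^m (with the convention ‖x‖^0 = 1 for x ≠ 0 and 0 for x = 0). -/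
open Classical
/-- The vector proximal problem for `λ‖·‖^p` reduces to the scalar problem at `‖a‖`:
if `t*` minimizes the scalar objective, then `t*·a/‖a‖` minimizes the vector objective. -/
theorem prox_group_lp_reduction (m : ℕ) (lam p : ℝ)
    (hlam : 0 < lam) (hp0 : 0 ≤ p) (hp1 : p < 1)
    (a : EuclideanSpace ℝ (Fin m)) (ha : a ≠ 0)
    (g : ℝ → ℝ)
    (hg : ∀ t, g t = lam * (if t = 0 then 0 else |t| ^ p) + (1 / 2) * (t - ‖a‖) ^ 2)
    (h : EuclideanSpace ℝ (Fin m) → ℝ)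
    (hh : ∀ x, h x = lam * (if x = 0 then 0 else ‖x‖ ^ p) + (1 / 2) * ‖x - a‖ ^ 2)
    (ts : ℝ) (hmin : ∀ t, g ts ≤ g t) :
    ∀ x, h ((ts / ‖a‖) • a) ≤ h x := by
  intro x
  have hna : (0 : ℝ) < ‖a‖ := norm_pos_iff.mpr ha
  set xs : EuclideanSpace ℝ (Fin m) := (ts / ‖a‖) • a with hxs
  -- h xs = g ts
  have hnxs : ‖xs‖ = |ts| := by
    rw [hxs, norm_smul, Real.norm_eq_abs, abs_div, abs_of_pos hna,
      div_mul_cancel₀ _ (ne_of_gt hna)]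
  have hxs0 : xs = 0 ↔ ts = 0 := by
    constructor
    · intro hz
      have := hnxs
      rw [hz, norm_zero] at this
      exact abs_eq_zero.mp this.symm
    · intro hz
      simp [hxs, hz]
  have hdiff : ‖xs - a‖ = |ts - ‖a‖| := by
    have : xs - a = ((ts - ‖a‖) / ‖a‖) • a := by
      rw [hxs]
      rw [sub_div, div_self (ne_of_gt hna), sub_smul, one_smul]
    rw [this, norm_smul, Real.norm_eq_abs, abs_div, abs_of_pos hna,
      div_mul_cancel₀ _ (ne_of_gt hna)]
  have h1 : h xs = g ts := by
    rw [hh, hg, hnxs, hdiff, sq_abs]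
    by_cases hz : ts = 0
    · simp [hz, hxs0]
    · rw [if_neg hz, if_neg (hxs0.not.mpr hz)]
  -- h x ≥ g ‖x‖
  have h2 : g ‖x‖ ≤ h x := by
    rw [hh, hg]
    have habs : |‖x‖ - ‖a‖| ≤ ‖x - a‖ := abs_norm_sub_norm_le x a
    have hsq : (‖x‖ - ‖a‖) ^ 2 ≤ ‖x - a‖ ^ 2 := by
      rw [← sq_abs (‖x‖ - ‖a‖)]
      exact pow_le_pow_left₀ (abs_nonneg _) habs 2
    have hind : (if ‖x‖ = 0 then (0:ℝ) else |‖x‖| ^ p)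
        = (if x = 0 then (0:ℝ) else ‖x‖ ^ p) := by
      by_cases hz : x = 0
      · simp [hz]
      · rw [if_neg hz, if_neg (norm_ne_zero_iff.mpr hz), abs_of_nonneg (norm_nonneg x)]
    rw [hind]
    nlinarith
  calc h xs = g ts := h1
    _ ≤ g ‖x‖ := hmin _
    _ ≤ h x := h2
end
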